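/- For every n ∈ ℕ and every OL formula φ all of whose resource bounds are at most n, the chain-fan models are OL-indistinguishable at their initial states: (M_{n+2}, s₁) ⊨ φ iff (M_{n+3}, s₁) ⊨ φ. -/

import Mathlib

set_option linter.unusedVariables false

/-! ## Models -/

structure Mdl (S : Type) where
  rel : S → S → Prop
  val : ℕ → Set S
  cost : S → S → ℕ

namespace Mdl
variable {S : Type}

/-- A proper model: serial relation and positive costs. -/
def IsModel (M : Mdl S) : Prop := (∀ s, ∃ t, M.rel s t) ∧ ∀ s t, 0 < M.cost s t

def Serial (M : Mdl S) : Prop := ∀ s, ∃ t, M.rel s t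

def remove (M : Mdl S) (A : Set (S × S)) : Mdl S :=
  { M with rel := fun a b => M.rel a b ∧ (a, b) ∉ A }

def add (M : Mdl S) (A : Set (S × S)) : Mdl S :=
  { M with rel := fun a b => M.rel a b ∨ (a, b) ∈ A }

/-- The set of edges `A` is finite with total cost at most `n`. -/
def costLe (M : Mdl S) (A : Set (S × S)) (n : ℕ) : Prop :=
  ∃ F : Finset (S × S), A = ↑F ∧ ∑ e ∈ F, M.cost e.1 e.2 ≤ n

end Mdl

abbrev PModel (S : Type) := Mdl S × S
abbrev Strat (S : Type) := PModel S → Set (S × S)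
abbrev MPath (S : Type) := ℕ → PModel S

/-- A demonic strategy outputs a subset of the edges of the given model. -/
def IsDemonic {S : Type} (σ : Strat S) : Prop :=
  ∀ Ms : PModel S, σ Ms ⊆ {e : S × S | Ms.1.rel e.1 e.2}

/-- An angelic strategy outputs a set of non-edges of the given model. -/
def IsAngelic {S : Type} (σ : Strat S) : Prop :=
  ∀ Ms : PModel S, σ Ms ⊆ {e : S × S | ¬ Ms.1.rel e.1 e.2}

/-! ### Demonic (SDL) paths -/

def DStep {S : Type} (σ : Strat S) (x y : PModel S) : Prop :=
  y.1 = x.1.remove (σ x) ∧ y.1.Serial ∧ y.1.rel x.2 y.2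

def DCompat {S : Type} (σ : Strat S) (π : MPath S) : Prop := ∀ i, DStep σ (π i) (π (i+1))

/-- `σ` is an `n`-strategy: on every compatible path each removed set has cost at most `n`. -/
def DBound {S : Type} (σ : Strat S) (n : ℕ) : Prop :=
  ∀ π : MPath S, DCompat σ π → ∀ i, (π i).1.costLe (σ (π i)) n

/-! ### Angelic (SCL) paths -/

def AStep {S : Type} (σ : Strat S) (x y : PModel S) : Prop :=
  y.1 = x.1.add (σ x) ∧ y.1.rel x.2 y.2

def ACompat {S : Type} (σ : Strat S) (π : MPath S) : Prop := ∀ i, AStep σ (π i) (π (i+1))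

def ABound {S : Type} (σ : Strat S) (n : ℕ) : Prop :=
  ∀ π : MPath S, ACompat σ π → ∀ i, (π i).1.costLe (σ (π i)) n

/-! ### Update (SUL) paths: angel budget `n`, demon budget `m` -/

def UStep {S : Type} (Sa Sd : Strat S) (n m : ℕ) (x y : PModel S) : Prop :=
  x.1.costLe (Sa x) n ∧ x.1.costLe (Sd x) m ∧
  y.1 = (x.1.remove (Sd x)).add (Sa x) ∧ y.1.Serial ∧ y.1.rel x.2 y.2

def UCompat {S : Type} (Sa Sd : Strat S) (n m : ℕ) (π : MPath S) : Prop :=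
  ∀ i, UStep Sa Sd n m (π i) (π (i+1))

/-! ## SDL -/

mutual
inductive SDLF : Type
  | atom : ℕ → SDLF
  | neg : SDLF → SDLF
  | and : SDLF → SDLF → SDLF
  | dia : ℕ → SDLP → SDLF
inductive SDLP : Type
  | nxt : SDLF → SDLP
  | untl : SDLF → SDLF → SDLP
  | rls : SDLF → SDLF → SDLP
end

mutual
def SDLSat {S : Type} : PModel S → SDLF → Prop
  | Ms, .atom p => Ms.2 ∈ Ms.1.val p
  | Ms, .neg φ => ¬ SDLSat Ms φ
  | Ms, .and φ χ => SDLSat Ms φ ∧ SDLSat Ms χ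
  | Ms, .dia n ψ => ∃ σ : Strat S, IsDemonic σ ∧ DBound σ n ∧
      ∀ π : MPath S, π 0 = Ms → DCompat σ π → SDLPSat π ψ
def SDLPSat {S : Type} : MPath S → SDLP → Prop
  | π, .nxt φ => SDLSat (π 1) φ
  | π, .untl φ χ => ∃ j, SDLSat (π j) χ ∧ ∀ i < j, SDLSat (π i) φ
  | π, .rls φ χ => (∀ j, SDLSat (π j) χ) ∨ ∃ k, SDLSat (π k) φ ∧ ∀ i ≤ k, SDLSat (π i) χ
end

/-! ## SCL -/

mutual
inductive SCLF : Type
  | atom : ℕ → SCLF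
  | neg : SCLF → SCLF
  | and : SCLF → SCLF → SCLF
  | dia : ℕ → SCLP → SCLF
inductive SCLP : Type
  | nxt : SCLF → SCLP
  | untl : SCLF → SCLF → SCLP
  | rls : SCLF → SCLF → SCLP
end

mutual
def SCLSat {S : Type} : PModel S → SCLF → Prop
  | Ms, .atom p => Ms.2 ∈ Ms.1.val p
  | Ms, .neg φ => ¬ SCLSat Ms φ
  | Ms, .and φ χ => SCLSat Ms φ ∧ SCLSat Ms χ
  | Ms, .dia n ψ => ∃ σ : Strat S, IsAngelic σ ∧ ABound σ n ∧
      ∀ π : MPath S, π 0 = Ms → ACompat σ π → SCLPSat π ψ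
def SCLPSat {S : Type} : MPath S → SCLP → Prop
  | π, .nxt φ => SCLSat (π 1) φ
  | π, .untl φ χ => ∃ j, SCLSat (π j) χ ∧ ∀ i < j, SCLSat (π i) φ
  | π, .rls φ χ => (∀ j, SCLSat (π j) χ) ∨ ∃ k, SCLSat (π k) φ ∧ ∀ i ≤ k, SCLSat (π i) χ
end

/-! ## SUL -/

/-- Coalitions `C ⊆ {∠, ★}`. -/
inductive Coal : Type
  | both : Coal
  | onlyAngel : Coal
  | onlyDemon : Coal
  | neither : Coal

mutual
inductive SULF : Type
  | atom : ℕ → SULF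
  | neg : SULF → SULF
  | and : SULF → SULF → SULF
  | strat : Coal → ℕ → ℕ → SULP → SULF
inductive SULP : Type
  | nxt : SULF → SULP
  | untl : SULF → SULF → SULP
  | rls : SULF → SULF → SULP
end

mutual
def SULSat {S : Type} : PModel S → SULF → Prop
  | Ms, .atom p => Ms.2 ∈ Ms.1.val p
  | Ms, .neg φ => ¬ SULSat Ms φ
  | Ms, .and φ χ => SULSat Ms φ ∧ SULSat Ms χ
  | Ms, .strat .both n m ψ =>
      -- ⟨⟨∠ⁿ,★ᵐ⟩⟩ψ
      ∃ Sa : Strat S, IsAngelic Sa ∧ ∃ Sd : Strat S, IsDemonic Sd ∧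
        ∀ π : MPath S, π 0 = Ms → UCompat Sa Sd n m π → SULPSat π ψ
  | Ms, .strat .onlyAngel n m ψ =>
      -- ⟨⟨∠^{n,m}⟩⟩ψ : angel has budget n, demon budget m
      ∃ Sa : Strat S, IsAngelic Sa ∧ ∀ Sd : Strat S, IsDemonic Sd →
        ∀ π : MPath S, π 0 = Ms → UCompat Sa Sd n m π → SULPSat π ψ
  | Ms, .strat .onlyDemon n m ψ =>
      -- ⟨⟨★^{n,m}⟩⟩ψ : demon has budget n, angel budget m
      ∃ Sd : Strat S, IsDemonic Sd ∧ ∀ Sa : Strat S, IsAngelic Sa →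
        ∀ π : MPath S, π 0 = Ms → UCompat Sa Sd m n π → SULPSat π ψ
  | Ms, .strat .neither n m ψ =>
      -- ⟨⟨∅^{n,m}⟩⟩ψ
      ∀ Sa : Strat S, IsAngelic Sa → ∀ Sd : Strat S, IsDemonic Sd →
        ∀ π : MPath S, π 0 = Ms → UCompat Sa Sd n m π → SULPSat π ψ
def SULPSat {S : Type} : MPath S → SULP → Prop
  | π, .nxt φ => SULSat (π 1) φ
  | π, .untl φ χ => ∃ j, SULSat (π j) χ ∧ ∀ i < j, SULSat (π i) φ
  | π, .rls φ χ => (∀ j, SULSat (π j) χ) ∨ ∃ k, SULSat (π k) φ ∧ ∀ i ≤ k, SULSat (π i) χ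
end

/-! ## Obstruction Logic -/

mutual
inductive OLF : Type
  | atom : ℕ → OLF
  | neg : OLF → OLF
  | and : OLF → OLF → OLF
  | dia : ℕ → OLP → OLF
inductive OLP : Type
  | nxt : OLF → OLP
  | untl : OLF → OLF → OLP
  | rls : OLF → OLF → OLP
end

/-- An OL `n`-strategy over the fixed model `M`. -/
def IsOLStrategy {S : Type} (M : Mdl S) (σ : S → Set (S × S)) (n : ℕ) : Prop :=
  ∀ s, σ s ⊆ {e : S × S | M.rel e.1 e.2} ∧ M.costLe (σ s) n ∧
    ∃ t, M.rel s t ∧ (s, t) ∉ σ s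

def OLCompat {S : Type} (M : Mdl S) (σ : S → Set (S × S)) (π : ℕ → S) : Prop :=
  ∀ i, M.rel (π i) (π (i+1)) ∧ (π i, π (i+1)) ∉ σ (π i)

mutual
def OLSat {S : Type} (M : Mdl S) : S → OLF → Prop
  | s, .atom p => s ∈ M.val p
  | s, .neg φ => ¬ OLSat M s φ
  | s, .and φ χ => OLSat M s φ ∧ OLSat M s χ
  | s, .dia n ψ => ∃ σ : S → Set (S × S), IsOLStrategy M σ n ∧
      ∀ π : ℕ → S, π 0 = s → OLCompat M σ π → OLPSat M π ψ
def OLPSat {S : Type} (M : Mdl S) : (ℕ → S) → OLP → Prop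
  | π, .nxt φ => OLSat M (π 1) φ
  | π, .untl φ χ => ∃ j, OLSat M (π j) χ ∧ ∀ i < j, OLSat M (π i) φ
  | π, .rls φ χ => (∀ j, OLSat M (π j) χ) ∨ ∃ k, OLSat M (π k) φ ∧ ∀ i ≤ k, OLSat M (π i) χ
end

/-! ## CTL -/

inductive CTLF : Type
  | atom : ℕ → CTLF
  | neg : CTLF → CTLF
  | and : CTLF → CTLF → CTLF
  | ax : CTLF → CTLF
  | ex : CTLF → CTLF
  | au : CTLF → CTLF → CTLF
  | ar : CTLF → CTLF → CTLF
  | eu : CTLF → CTLF → CTLF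
  | er : CTLF → CTLF → CTLF

def IsPath {S : Type} (M : Mdl S) (π : ℕ → S) : Prop := ∀ i, M.rel (π i) (π (i+1))

def CTLSat {S : Type} (M : Mdl S) : S → CTLF → Prop
  | s, .atom p => s ∈ M.val p
  | s, .neg φ => ¬ CTLSat M s φ
  | s, .and φ χ => CTLSat M s φ ∧ CTLSat M s χ
  | s, .ax φ => ∀ π : ℕ → S, π 0 = s → IsPath M π → CTLSat M (π 1) φ
  | s, .ex φ => ∃ π : ℕ → S, π 0 = s ∧ IsPath M π ∧ CTLSat M (π 1) φ
  | s, .au φ χ => ∀ π : ℕ → S, π 0 = s → IsPath M π →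
      ∃ j, CTLSat M (π j) χ ∧ ∀ i < j, CTLSat M (π i) φ
  | s, .ar φ χ => ∀ π : ℕ → S, π 0 = s → IsPath M π →
      ((∀ j, CTLSat M (π j) χ) ∨ ∃ k, CTLSat M (π k) φ ∧ ∀ i ≤ k, CTLSat M (π i) χ)
  | s, .eu φ χ => ∃ π : ℕ → S, π 0 = s ∧ IsPath M π ∧
      ∃ j, CTLSat M (π j) χ ∧ ∀ i < j, CTLSat M (π i) φ
  | s, .er φ χ => ∃ π : ℕ → S, π 0 = s ∧ IsPath M π ∧
      ((∀ j, CTLSat M (π j) χ) ∨ ∃ k, CTLSat M (π k) φ ∧ ∀ i ≤ k, CTLSat M (π i) χ)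

/-! ## Chain-fan models -/

/-- The chain-fan model with chain states `s₁,…,s_{n+1}` (encoded as `Fin (n+1)`,
with `sᵢ = i-1`) and fan states `t₁,…,t_{k+1}` (encoded as `Fin (k+1)`, with
`tⱼ = j-1`): edges `sᵢ → s_{i+1}`, `s_{n+1} → tⱼ` for every `j`, and self-loops
on every `tⱼ`; the atom `p` (atom `0`) is true exactly at `t₁`, and all edge
costs are `1`.  `M_{n+2}` of the paper is `chainFan n (n+1)` and `M_{n+3}` is
`chainFan n (n+2)`. -/
def chainFan (n k : ℕ) : Mdl (Fin (n+1) ⊕ Fin (k+1)) :=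
  { rel := fun a b =>
      match a, b with
      | .inl i, .inl j => (j : ℕ) = (i : ℕ) + 1
      | .inl i, .inr _ => (i : ℕ) = n
      | .inr i, .inr j => i = j
      | .inr _, .inl _ => False
    val := fun q => {a | q = 0 ∧ a = Sum.inr 0}
    cost := fun _ _ => 1 }

/-! ## Resource bounds of OL formulas -/

mutual
/-- All resource bounds occurring in the OL state formula are at most `n`. -/
def OLF.boundsLe : OLF → ℕ → Prop
  | .atom _, _ => True
  | .neg φ, n => φ.boundsLe n
  | .and φ χ, n => φ.boundsLe n ∧ χ.boundsLe n
  | .dia m ψ, n => m ≤ n ∧ ψ.boundsLe n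
/-- All resource bounds occurring in the OL path formula are at most `n`. -/
def OLP.boundsLe : OLP → ℕ → Prop
  | .nxt φ, n => φ.boundsLe n
  | .untl φ χ, n => φ.boundsLe n ∧ χ.boundsLe n
  | .rls φ χ, n => φ.boundsLe n ∧ χ.boundsLe n
end

/-!
A demon with budget `m ≤ n` cannot block all `n + 1` or more edges from `s_{n+1}` into the
fan, so the only thing it can control there is whether `t₁` (the `p`-state) is reachable.
Hence identifying chain states by position and fan states by whether they satisfy `p` is a
bisimulation for the game with budget at most `n`, in the sense that every demon strategy on
one side can be answered by one on the other side whose plays are matched step by step.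
-/

open Sum

section Simulation

variable {S₁ S₂ : Type}

def OLMove {S : Type} (M : Mdl S) (σ : S → Set (S × S)) (a b : S) : Prop :=
  M.rel a b ∧ (a, b) ∉ σ a

theorem IsOLStrategy.olMove_of_forall_rel_eq {S : Type} {M : Mdl S} {σ : S → Set (S × S)}
    {m : ℕ} (hσ : IsOLStrategy M σ m) {s t₀ : S} (h : ∀ t, M.rel s t → t = t₀) :
    OLMove M σ s t₀ := by
  obtain ⟨t, ht, htσ⟩ := (hσ s).2.2
  obtain rfl := h t ht
  exact ⟨ht, htσ⟩

structure IsOLSimulation (M₁ : Mdl S₁) (M₂ : Mdl S₂) (n : ℕ) (R : S₁ → S₂ → Prop) : Prop where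
  mem_val : ∀ x y, R x y → ∀ p, x ∈ M₁.val p → y ∈ M₂.val p
  exists_strategy : ∀ m ≤ n, ∀ σ₁, IsOLStrategy M₁ σ₁ m → ∃ σ₂, IsOLStrategy M₂ σ₂ m ∧
    ∀ x y, R x y → ∀ y', OLMove M₂ σ₂ y y' → ∃ x', OLMove M₁ σ₁ x x' ∧ R x' y'

theorem exists_seq_lift {α β : Type} {R : α → β → Prop} {E₁ : α → α → Prop}
    {E₂ : β → β → Prop} (hback : ∀ a b, R a b → ∀ b', E₂ b b' → ∃ a', E₁ a a' ∧ R a' b')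
    (v : ℕ → β) (hv : ∀ i, E₂ (v i) (v (i + 1))) {a : α} (ha : R a (v 0)) :
    ∃ u : ℕ → α, u 0 = a ∧ (∀ i, R (u i) (v i)) ∧ ∀ i, E₁ (u i) (u (i + 1)) := by
  choose f hfE hfR using hback
  let u : ∀ i, {a // R a (v i)} :=
    fun i => Nat.rec ⟨a, ha⟩ (fun i p => ⟨f p.1 (v i) p.2 _ (hv i), hfR _ _ _ _ _⟩) i
  exact ⟨fun i => (u i).1, rfl, fun i => (u i).2, fun i => hfE _ _ _ _ _⟩

variable {M₁ : Mdl S₁} {M₂ : Mdl S₂} {n : ℕ} {R : S₁ → S₂ → Prop}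

theorem IsOLSimulation.olSat_dia (hR : IsOLSimulation M₁ M₂ n R) {m : ℕ} (hm : m ≤ n) {ψ : OLP}
    (hψ : ∀ π₁ π₂, (∀ i, R (π₁ i) (π₂ i)) → OLPSat M₁ π₁ ψ → OLPSat M₂ π₂ ψ)
    {x : S₁} {y : S₂} (hxy : R x y) (hx : OLSat M₁ x (.dia m ψ)) : OLSat M₂ y (.dia m ψ) := by
  obtain ⟨σ₁, hσ₁, hwin⟩ := hx
  obtain ⟨σ₂, hσ₂, hback⟩ := hR.exists_strategy m hm σ₁ hσ₁
  refine ⟨σ₂, hσ₂, fun π₂ hπ₂0 hπ₂ => ?_⟩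
  obtain ⟨π₁, hπ₁0, hπR, hπ₁⟩ := exists_seq_lift hback π₂ hπ₂ (hπ₂0 ▸ hxy)
  exact hψ π₁ π₂ hπR (hwin π₁ hπ₁0 hπ₁)

mutual
theorem IsOLSimulation.olSat_iff (hR : IsOLSimulation M₁ M₂ n R)
    (hR' : IsOLSimulation M₂ M₁ n (flip R)) :
    ∀ (φ : OLF), φ.boundsLe n → ∀ x y, R x y → (OLSat M₁ x φ ↔ OLSat M₂ y φ)
  | .atom p, _, x, y, hxy => ⟨hR.mem_val x y hxy p, hR'.mem_val y x hxy p⟩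
  | .neg φ, hφ, x, y, hxy => not_congr (hR.olSat_iff hR' φ hφ x y hxy)
  | .and φ χ, ⟨hφ, hχ⟩, x, y, hxy =>
    and_congr (hR.olSat_iff hR' φ hφ x y hxy) (hR.olSat_iff hR' χ hχ x y hxy)
  | .dia m ψ, ⟨hm, hψ⟩, x, y, hxy =>
    ⟨hR.olSat_dia hm (fun π₁ π₂ h => (hR.olPSat_iff hR' ψ hψ π₁ π₂ h).1) hxy,
      hR'.olSat_dia hm (fun π₂ π₁ h => (hR.olPSat_iff hR' ψ hψ π₁ π₂ h).2) hxy⟩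

theorem IsOLSimulation.olPSat_iff (hR : IsOLSimulation M₁ M₂ n R)
    (hR' : IsOLSimulation M₂ M₁ n (flip R)) :
    ∀ (ψ : OLP), ψ.boundsLe n → ∀ π₁ π₂, (∀ i, R (π₁ i) (π₂ i)) →
      (OLPSat M₁ π₁ ψ ↔ OLPSat M₂ π₂ ψ)
  | .nxt φ, hφ, π₁, π₂, h => hR.olSat_iff hR' φ hφ _ _ (h 1)
  | .untl φ χ, ⟨hφ, hχ⟩, π₁, π₂, h => by
    have eφ := fun i => hR.olSat_iff hR' φ hφ _ _ (h i)
    have eχ := fun i => hR.olSat_iff hR' χ hχ _ _ (h i)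
    simp only [OLPSat, eφ, eχ]
  | .rls φ χ, ⟨hφ, hχ⟩, π₁, π₂, h => by
    have eφ := fun i => hR.olSat_iff hR' φ hφ _ _ (h i)
    have eχ := fun i => hR.olSat_iff hR' χ hχ _ _ (h i)
    simp only [OLPSat, eφ, eχ]
end

end Simulation

section ChainFan

variable {n k : ℕ}

abbrev ChainFanState (n k : ℕ) : Type := Fin (n+1) ⊕ Fin (k+1)

theorem chainFan_costLe_iff {A : Set (ChainFanState n k × ChainFanState n k)}
    {m : ℕ} : (chainFan n k).costLe A m ↔ A.ncard ≤ m := by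
  constructor
  · rintro ⟨F, rfl, hF⟩
    simpa [chainFan] using hF
  · intro hA
    refine ⟨A.toFinite.toFinset, by simp, ?_⟩
    simpa [chainFan, Set.ncard_eq_toFinset_card A] using hA

theorem chainFan_rel_inl_eq {i j : Fin (n+1)} (hj : (j : ℕ) = i + 1)
    {t : ChainFanState n k} (ht : (chainFan n k).rel (inl i) t) : t = inl j := by
  cases t with
  | inl t => exact congrArg inl (Fin.ext (by simp only [chainFan] at ht; omega))
  | inr t => simp only [chainFan] at ht; omega

theorem chainFan_rel_inr_eq {j : Fin (k+1)} {t : ChainFanState n k}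
    (ht : (chainFan n k).rel (inr j) t) : t = inr j := by
  cases t with
  | inl t => exact ht.elim
  | inr t => exact congrArg inr (ht : j = t).symm

theorem serial_chainFan (n k : ℕ) : (chainFan n k).Serial := by
  rintro (i | j)
  · by_cases hi : (i : ℕ) < n
    · exact ⟨inl ⟨i + 1, by omega⟩, rfl⟩
    · exact ⟨inr 0, show (i : ℕ) = n by omega⟩
  · exact ⟨inr j, rfl⟩

theorem IsOLStrategy.exists_olMove_fan_ne_zero
    {σ : ChainFanState n k → Set (ChainFanState n k × ChainFanState n k)} {m : ℕ}
    (hσ : IsOLStrategy (chainFan n k) σ m) (hm : m ≤ n) (hk : n < k) :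
    ∃ j : Fin (k+1), j ≠ 0 ∧ OLMove (chainFan n k) σ (inl (Fin.last n)) (inr j) := by
  by_contra! hblocked
  have hsub : Set.range (fun j : Fin k => ((inl (Fin.last n), inr j.succ) :
      ChainFanState n k × ChainFanState n k)) ⊆ σ (inl (Fin.last n)) := by
    rintro _ ⟨j, rfl⟩
    by_contra hj
    exact hblocked j.succ (Fin.succ_ne_zero j) ⟨Fin.val_last n, hj⟩
  have hinj : Function.Injective (fun j : Fin k => ((inl (Fin.last n), inr j.succ) :
      ChainFanState n k × ChainFanState n k)) := by
    intro a b hab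
    simpa using hab
  have hcard := Set.ncard_le_ncard hsub
  rw [Set.ncard_range_of_injective hinj, Nat.card_eq_fintype_card, Fintype.card_fin] at hcard
  have := chainFan_costLe_iff.mp (hσ (inl (Fin.last n))).2.1
  omega

def chainFanRel (n k₁ k₂ : ℕ) : ChainFanState n k₁ → ChainFanState n k₂ → Prop
  | inl i, inl i' => i = i'
  | inr j, inr j' => (j = 0 ↔ j' = 0)
  | _, _ => False

theorem flip_chainFanRel (n k₁ k₂ : ℕ) : flip (chainFanRel n k₁ k₂) = chainFanRel n k₂ k₁ := by
  ext y x
  cases x <;> cases y <;> simp only [flip, chainFanRel] <;> tauto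

def chainFanTransfer {k₁ : ℕ} (k₂ : ℕ)
    (σ₁ : ChainFanState n k₁ → Set (ChainFanState n k₁ × ChainFanState n k₁)) :
    ChainFanState n k₂ → Set (ChainFanState n k₂ × ChainFanState n k₂) :=
  fun s => {e | s = inl (Fin.last n) ∧ e = (s, inr 0) ∧
    (inl (Fin.last n), inr 0) ∈ σ₁ (inl (Fin.last n))}

theorem isOLStrategy_chainFanTransfer {k₁ k₂ m : ℕ} (hk₂ : 0 < k₂)
    {σ₁ : ChainFanState n k₁ → Set (ChainFanState n k₁ × ChainFanState n k₁)}
    (hσ₁ : IsOLStrategy (chainFan n k₁) σ₁ m) :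
    IsOLStrategy (chainFan n k₂) (chainFanTransfer k₂ σ₁) m := by
  intro s
  refine ⟨?_, ?_, ?_⟩
  · rintro _ ⟨rfl, rfl, -⟩
    exact Fin.val_last n
  · rw [chainFan_costLe_iff]
    rcases (chainFanTransfer k₂ σ₁ s).eq_empty_or_nonempty with hempty | ⟨_, -, -, hmem⟩
    · simp [hempty]
    · have hsub : chainFanTransfer k₂ σ₁ s ⊆ {(s, inr 0)} := fun e he => he.2.1
      calc (chainFanTransfer k₂ σ₁ s).ncard
          ≤ 1 := (Set.ncard_le_ncard hsub).trans_eq (Set.ncard_singleton _)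
        _ ≤ (σ₁ (inl (Fin.last n))).ncard := (Set.ncard_pos).mpr ⟨_, hmem⟩
        _ ≤ m := chainFan_costLe_iff.mp (hσ₁ _).2.1
  · by_cases hs : s = inl (Fin.last n)
    · subst hs
      refine ⟨inr ⟨1, by omega⟩, Fin.val_last n, ?_⟩
      rintro ⟨-, he, -⟩
      simp [Fin.ext_iff] at he
    · obtain ⟨t, ht⟩ := serial_chainFan n k₂ s
      exact ⟨t, ht, fun he => hs he.1⟩

theorem exists_olMove_of_olMove_chainFanTransfer {k₁ k₂ m : ℕ}
    {σ₁ : ChainFanState n k₁ → Set (ChainFanState n k₁ × ChainFanState n k₁)}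
    (hσ₁ : IsOLStrategy (chainFan n k₁) σ₁ m) (hm : m ≤ n) (hk₁ : n < k₁)
    {x : ChainFanState n k₁} {y y' : ChainFanState n k₂} (hxy : chainFanRel n k₁ k₂ x y)
    (hy' : OLMove (chainFan n k₂) (chainFanTransfer k₂ σ₁) y y') :
    ∃ x', OLMove (chainFan n k₁) σ₁ x x' ∧ chainFanRel n k₁ k₂ x' y' := by
  rcases x with i | j <;> rcases y with i' | j' <;> simp only [chainFanRel] at hxy
  case inl.inl =>
    subst hxy
    rcases y' with j | j
    · exact ⟨inl j, hσ₁.olMove_of_forall_rel_eq fun t => chainFan_rel_inl_eq hy'.1, rfl⟩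
    · obtain rfl : i = Fin.last n := Fin.ext hy'.1
      by_cases hj : j = 0
      · subst hj
        refine ⟨inr 0, ⟨Fin.val_last n, fun hmem => hy'.2 ⟨rfl, rfl, hmem⟩⟩, ?_⟩
        simp [chainFanRel]
      · obtain ⟨j₁, hj₁, hmove⟩ := hσ₁.exists_olMove_fan_ne_zero hm hk₁
        exact ⟨inr j₁, hmove, iff_of_false hj₁ hj⟩
  case inr.inr =>
    obtain rfl := chainFan_rel_inr_eq hy'.1
    exact ⟨inr j, hσ₁.olMove_of_forall_rel_eq fun t => chainFan_rel_inr_eq, hxy⟩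

theorem isOLSimulation_chainFan {k₁ k₂ : ℕ} (hk₁ : n < k₁) (hk₂ : 0 < k₂) :
    IsOLSimulation (chainFan n k₁) (chainFan n k₂) n (chainFanRel n k₁ k₂) where
  mem_val := by
    rintro (i | j) (i' | j') hxy p ⟨rfl, hx⟩
    all_goals simp only [chainFanRel] at hxy
    · cases hx
    · obtain rfl : j = 0 := inr_injective hx
      exact ⟨rfl, congrArg inr (hxy.mp rfl)⟩
  exists_strategy m hm σ₁ hσ₁ := ⟨_, isOLStrategy_chainFanTransfer hk₂ hσ₁,
    fun _ _ hxy _ hy' => exists_olMove_of_olMove_chainFanTransfer hσ₁ hm hk₁ hxy hy'⟩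

end ChainFan

/-- For every `n` and every OL formula `φ` whose resource bounds are all at
most `n`, the chain-fan models `M_{n+2}` and `M_{n+3}` are OL-indistinguishable
at their initial states `s₁`. -/
theorem chainFan_OL_indistinguishable (n : ℕ) (φ : OLF) (h : φ.boundsLe n) :
    OLSat (chainFan n (n+1)) (Sum.inl 0) φ ↔
    OLSat (chainFan n (n+2)) (Sum.inl 0) φ :=
  (isOLSimulation_chainFan (by omega) (by omega)).olSat_iff
    (flip_chainFanRel n (n+1) (n+2) ▸ isOLSimulation_chainFan (by omega) (by omega)) φ h _ _ rfl
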